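/- arXiv:math/0407022 — 3 statements merged into one kernel-verified Lean document; each statement's English description precedes it below -/
import Mathlib

section
/- Let G be a finite abelian p-group that is not elementary abelian (i.e., not annihilated by p). Then the Möbius function of the subgroup lattice of G evaluated on (trivial subgroup, G) equals 0. -/
/-!
The subgroup `Gᵖ` of `p`-th powers is non-generating: if `A ⊔ Gᵖ = G`, then substituting this
decomposition into itself gives `A ⊔ G^(pᵏ) = G` for every `k`, and `G^(pᵏ)` is trivial once `pᵏ`
is a multiple of the exponent. In a finite lattice, `μ(A, ⊤) = 0` whenever `A` does not lie above
a non-generating element `Φ`: by downward induction, the terms of the defining sum over `[A, ⊤]`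
that survive are `μ(A, ⊤)` and those over `[A ⊔ Φ, ⊤]`, and the latter add up to `0` because
`A ⊔ Φ ≠ ⊤`. As `G` is not elementary abelian, `Gᵖ ≠ ⊥`, so this applies to `A = ⊥`.
-/

open scoped BigOperators Classical

theorem eq_zero_of_finsum_Ici_eq_ite_of_not_le {L : Type*} [Lattice L] [OrderTop L] [Finite L]
    {μ : L → ℤ} (hμ : ∀ A, ∑ᶠ C ∈ Set.Ici A, μ C = if A = ⊤ then 1 else 0)
    {Φ : L} (hΦ : ∀ A, A ⊔ Φ = ⊤ → A = ⊤) {A : L} (hA : ¬ Φ ≤ A) : μ A = 0 := by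
  induction A using WellFoundedGT.induction with
  | _ A ih =>
    have hA_ne_top : A ≠ ⊤ := by rintro rfl; exact hA le_top
    have hsup_ne_top : A ⊔ Φ ≠ ⊤ := fun h => hA_ne_top (hΦ A h)
    have htail : ∑ᶠ C ∈ Set.Ioi A, μ C = ∑ᶠ C ∈ Set.Ici (A ⊔ Φ), μ C := by
      refine finsum_mem_inter_support_eq' _ _ _ fun C hC => ⟨fun hAC => ?_, fun hle => ?_⟩
      · exact sup_le hAC.le (not_not.mp (mt (ih C hAC) hC))
      · refine lt_of_le_of_ne (le_sup_left.trans hle) ?_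
        rintro rfl
        exact hA (le_sup_right.trans hle)
    have hsum := hμ A
    rw [← Set.Ioi_insert, finsum_mem_insert _ Set.self_notMem_Ioi (Set.toFinite _), htail, hμ,
      if_neg hsup_ne_top, if_neg hA_ne_top, add_zero] at hsum
    exact hsum

namespace Subgroup

variable {G : Type*} [CommGroup G]

theorem sup_range_powMonoidHom_mul_eq_top {A : Subgroup G} {m n : ℕ}
    (hm : A ⊔ (powMonoidHom m).range = ⊤) (hn : A ⊔ (powMonoidHom n).range = ⊤) :
    A ⊔ (powMonoidHom (m * n)).range = ⊤ := by
  refine eq_top_iff.mpr fun g _ => ?_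
  obtain ⟨a, ha, _, ⟨y, rfl⟩, rfl⟩ := mem_sup.mp (hm.ge (mem_top g))
  obtain ⟨b, hb, _, ⟨z, rfl⟩, rfl⟩ := mem_sup.mp (hn.ge (mem_top y))
  refine mem_sup.mpr ⟨a * b ^ m, mul_mem ha (pow_mem hb m), z ^ (m * n), ⟨z, rfl⟩, ?_⟩
  simp only [powMonoidHom_apply]
  rw [mul_pow, ← pow_mul, mul_comm n m, mul_assoc]

theorem sup_range_powMonoidHom_pow_eq_top {A : Subgroup G} {p : ℕ}
    (h : A ⊔ (powMonoidHom p).range = ⊤) (k : ℕ) : A ⊔ (powMonoidHom (p ^ k)).range = ⊤ := by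
  induction k with
  | zero => exact eq_top_iff.mpr fun g _ => mem_sup_right ⟨g, pow_one g⟩
  | succ k ih => exact pow_succ p k ▸ sup_range_powMonoidHom_mul_eq_top ih h

theorem eq_top_of_sup_range_powMonoidHom_eq_top [Finite G] {p : ℕ} (hG : IsPGroup p G)
    {A : Subgroup G} (h : A ⊔ (powMonoidHom p).range = ⊤) : A = ⊤ := by
  obtain ⟨k, hk⟩ := hG.exists_exponent_dvd_pow
  have hbot : (powMonoidHom (p ^ k) : G →* G).range = ⊥ := by
    rw [eq_bot_iff]
    rintro _ ⟨g, rfl⟩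
    exact Monoid.exponent_dvd_iff_forall_pow_eq_one.mp hk g
  simpa [hbot] using sup_range_powMonoidHom_pow_eq_top h k

end Subgroup

theorem stmt3_general (p : ℕ) (G : Type) [CommGroup G] [Finite G]
    (hpgroup : IsPGroup p G) (hnotelem : ∃ g : G, g ^ p ≠ 1)
    (μ : Subgroup G → Subgroup G → ℤ)
    (hμ : ∀ A B : Subgroup G, A ≤ B →
      (∑ᶠ C ∈ {C : Subgroup G | A ≤ C ∧ C ≤ B}, μ C B) = if A = B then 1 else 0) :
    μ ⊥ ⊤ = 0 := by
  have hμ_top : ∀ A, ∑ᶠ C ∈ Set.Ici A, μ C ⊤ = if A = ⊤ then 1 else 0 := fun A => by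
    simpa [Set.Ici_def] using hμ A ⊤ le_top
  obtain ⟨g, hg⟩ := hnotelem
  refine eq_zero_of_finsum_Ici_eq_ite_of_not_le hμ_top
    (fun A => Subgroup.eq_top_of_sup_range_powMonoidHom_eq_top hpgroup) fun hle => hg ?_
  exact Subgroup.mem_bot.mp (hle ⟨g, rfl⟩)

/-- If a finite abelian `p`-group is not elementary abelian (not annihilated by `p`),
then the Möbius function of its subgroup lattice evaluated on `(⊥, ⊤)` is `0`. -/
theorem stmt3 (p : ℕ) (hp : p.Prime) (G : Type) [CommGroup G] [Finite G]
    (hpgroup : IsPGroup p G) (hnotelem : ∃ g : G, g ^ p ≠ 1)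
    (μ : Subgroup G → Subgroup G → ℤ)
    (hμ : ∀ A B : Subgroup G, A ≤ B →
      (∑ᶠ C ∈ {C : Subgroup G | A ≤ C ∧ C ≤ B}, μ C B) = if A = B then 1 else 0) :
    μ ⊥ ⊤ = 0 :=
  stmt3_general p G hpgroup hnotelem μ hμ
end

section
/- Let A be a Noetherian commutative ring and I ⊆ A an ideal. Then the I-adic completion of any free A-module (on an arbitrary index set) is a flat A-module. -/
open LinearMap

namespace Stmt6Aux
set_option linter.unusedSectionVars false

variable {A : Type} [CommRing A] {S : Type} {ι : Type} [Fintype ι]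

/-- Evaluation of columns. -/
noncomputable def toCol (s : S) : (ι → (S →₀ A)) →ₗ[A] (ι → A) :=
  LinearMap.pi fun i => Finsupp.lapply s ∘ₗ LinearMap.proj i

@[simp] lemma toCol_apply (s : S) (v : ι → (S →₀ A)) (i : ι) : toCol s v i = v i s := rfl

/-- Inclusion of a column. -/
noncomputable def ofCol (s : S) : (ι → A) →ₗ[A] (ι → (S →₀ A)) :=
  LinearMap.pi fun i => Finsupp.lsingle s ∘ₗ LinearMap.proj i

@[simp] lemma ofCol_apply (s : S) (u : ι → A) (i : ι) :
    ofCol s u i = Finsupp.single s (u i) := rfl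

/-- Vectors of finsupps all of whose columns lie in `Q`. -/
noncomputable def colSub (S : Type) (Q : Submodule A (ι → A)) :
    Submodule A (ι → (S →₀ A)) :=
  ⨅ s : S, Q.comap (toCol s)

lemma mem_colSub {Q : Submodule A (ι → A)} {v : ι → (S →₀ A)} :
    v ∈ colSub S Q ↔ ∀ s, toCol s v ∈ Q := by
  simp [colSub]

lemma colSub_mono {Q Q' : Submodule A (ι → A)} (h : Q ≤ Q') :
    colSub S Q ≤ colSub S Q' := fun v hv =>
  mem_colSub.mpr fun s => h (mem_colSub.mp hv s)

lemma colSub_top : colSub (A := A) (ι := ι) S ⊤ = ⊤ := by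
  ext v; simp [mem_colSub]

lemma colSub_inf (Q Q' : Submodule A (ι → A)) :
    colSub S (Q ⊓ Q') = colSub S Q ⊓ colSub S Q' := by
  ext v; simp [mem_colSub, forall_and, Submodule.mem_inf]

/-- The (finite) joint support of a vector of finsupps. -/
noncomputable def supp (v : ι → (S →₀ A)) : Finset S :=
  haveI := Classical.decEq S
  Finset.univ.biUnion fun i => (v i).support

lemma mem_supp {v : ι → (S →₀ A)} {i : ι} {s : S} (h : s ∈ (v i).support) : s ∈ supp v := by
  classical
  simp only [supp, Finset.mem_biUnion]
  exact ⟨i, Finset.mem_univ i, h⟩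

lemma sum_ofCol {T : Finset S} {v : ι → (S →₀ A)} (hT : supp v ⊆ T) :
    ∑ s ∈ T, ofCol s (toCol s v) = v := by
  funext i
  rw [Finset.sum_apply]
  simp only [ofCol_apply, toCol_apply]
  have hsupp : (v i).support ⊆ T := fun s hs => hT (mem_supp hs)
  rw [← Finsupp.sum_of_support_subset (v i) hsupp (fun s a => Finsupp.single s a)
    (fun s _ => Finsupp.single_zero s)]
  exact Finsupp.sum_single (v i)

lemma ofCol_mem_colSub {Q : Submodule A (ι → A)} (s : S) {u : ι → A} (hu : u ∈ Q) :
    ofCol s u ∈ colSub S Q := by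
  classical
  rw [mem_colSub]
  intro s'
  have h : toCol s' (ofCol s u) = if s = s' then u else 0 := by
    funext i
    simp only [toCol_apply, ofCol_apply, Finsupp.single_apply]
    split <;> simp
  rw [h]
  split <;> simp [hu, Q.zero_mem]

lemma map_ofCol_le {Q : Submodule A (ι → A)} (s : S) :
    Submodule.map (ofCol (A := A) (ι := ι) s) Q ≤ colSub S Q := by
  rintro _ ⟨u, hu, rfl⟩
  exact ofCol_mem_colSub s hu

lemma colSub_smul (J : Ideal A) (Q : Submodule A (ι → A)) :
    colSub S (J • Q) = J • colSub S Q := by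
  refine le_antisymm ?_ ?_
  · intro v hv
    rw [← sum_ofCol (subset_refl (supp v))]
    refine Submodule.sum_mem _ fun s _ => ?_
    have h1 : ofCol s (toCol s v) ∈ Submodule.map (ofCol (A := A) (ι := ι) s) (J • Q) :=
      Submodule.mem_map_of_mem (mem_colSub.mp hv s)
    rw [Submodule.map_smul''] at h1
    exact Submodule.smul_mono le_rfl (map_ofCol_le s) h1
  · refine Submodule.smul_le.mpr fun j hj v hv => ?_
    rw [mem_colSub]
    intro s
    rw [map_smul]
    exact Submodule.smul_mem_smul hj (mem_colSub.mp hv s)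

lemma colSub_sup (Q Q' : Submodule A (ι → A)) :
    colSub S (Q ⊔ Q') = colSub S Q ⊔ colSub S Q' := by
  refine le_antisymm ?_ (sup_le (colSub_mono le_sup_left) (colSub_mono le_sup_right))
  intro v hv
  have h : ∀ s : S, ∃ q ∈ Q, ∃ q' ∈ Q', q + q' = toCol s v := fun s =>
    Submodule.mem_sup.mp (mem_colSub.mp hv s)
  choose q hq q' hq' hqq' using h
  refine Submodule.mem_sup.mpr ⟨∑ s ∈ supp v, ofCol s (q s), ?_, ∑ s ∈ supp v, ofCol s (q' s), ?_, ?_⟩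
  · exact Submodule.sum_mem _ fun s _ => ofCol_mem_colSub s (hq s)
  · exact Submodule.sum_mem _ fun s _ => ofCol_mem_colSub s (hq' s)
  · rw [← Finset.sum_add_distrib]
    conv_rhs => rw [← sum_ofCol (subset_refl (supp v))]
    refine Finset.sum_congr rfl fun s _ => ?_
    rw [← map_add, hqq']

section Mat

variable {n : ℕ} (a : Fin n → ι → A)

/-- The linear map `N^n → N^ι` induced by the matrix `a`. -/
noncomputable def matMap (N : Type) [AddCommGroup N] [Module A N] :
    (Fin n → N) →ₗ[A] (ι → N) :=
  LinearMap.pi fun i => ∑ j, a j i • LinearMap.proj j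

@[simp] lemma matMap_apply (N : Type) [AddCommGroup N] [Module A N] (w : Fin n → N) (i : ι) :
    matMap a N w i = ∑ j, a j i • w j := by
  simp [matMap, LinearMap.pi_apply, LinearMap.sum_apply]

lemma range_matMap : LinearMap.range (matMap a A) = Submodule.span A (Set.range a) := by
  have h : matMap a A = Fintype.linearCombination A a :=
    LinearMap.ext fun c => funext fun i => by
      simp [Fintype.linearCombination_apply, Finset.sum_apply, mul_comm]
  rw [h, Fintype.range_linearCombination]

lemma matMap_toCol (s : S) (w : Fin n → (S →₀ A)) :
    toCol s (matMap a (S →₀ A) w) = matMap a A (toCol s w) := by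
  funext i
  simp [Finset.sum_apply']

lemma matMap_ofCol (s : S) (c : Fin n → A) :
    matMap a (S →₀ A) (ofCol s c) = ofCol s (matMap a A c) := by
  funext i
  simp only [matMap_apply, ofCol_apply, Finsupp.smul_single]
  rw [← Finsupp.single_finset_sum]

lemma colSub_eq_range (K : Submodule A (ι → A)) (hK : LinearMap.range (matMap a A) = K) :
    colSub S K = LinearMap.range (matMap a (S →₀ A)) := by
  refine le_antisymm ?_ ?_
  · intro v hv
    have h : ∀ s : S, ∃ c : Fin n → A, matMap a A c = toCol s v := fun s => by
      have := mem_colSub.mp hv s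
      rw [← hK] at this
      exact this
    choose c hc using h
    refine ⟨∑ s ∈ supp v, ofCol s (c s), ?_⟩
    rw [map_sum]
    conv_rhs => rw [← sum_ofCol (subset_refl (supp v))]
    refine Finset.sum_congr rfl fun s _ => ?_
    rw [matMap_ofCol, hc]
  · rintro _ ⟨w, rfl⟩
    rw [mem_colSub]
    intro s
    rw [matMap_toCol, ← hK]
    exact LinearMap.mem_range_self _ _

end Mat

section Pi

variable {N : Type} [AddCommGroup N] [Module A N]

lemma mem_smul_top_pi_iff {J : Ideal A} {v : ι → N} :
    v ∈ (J • ⊤ : Submodule A (ι → N)) ↔ ∀ i, v i ∈ (J • ⊤ : Submodule A N) := by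
  constructor
  · intro hv i
    have h : (LinearMap.proj i : (ι → N) →ₗ[A] N) v ∈
        Submodule.map (LinearMap.proj (R := A) (φ := fun _ : ι => N) i) (J • ⊤) :=
      Submodule.mem_map_of_mem hv
    rw [Submodule.map_smul''] at h
    exact Submodule.smul_mono le_rfl le_top h
  · intro hv
    classical
    rw [← Finset.univ_sum_single v]
    refine Submodule.sum_mem _ fun i _ => ?_
    have h : Pi.single i (v i) ∈
        Submodule.map (LinearMap.single A (fun _ : ι => N) i) (J • ⊤) :=
      Submodule.mem_map_of_mem (hv i)
    rw [Submodule.map_smul''] at h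
    exact Submodule.smul_mono le_rfl le_top h

end Pi

section Shift

variable [IsNoetherianRing A] (I : Ideal A)

/-- If `F w` is deep in the `I`-adic filtration, then `w` is in `ker F` up to a deep element:
a consequence of the Artin-Rees lemma. -/
lemma exists_shift (F : (ι → A) →ₗ[A] A) :
    ∃ c : ℕ, ∀ m : ℕ, ∀ w : ι → A, F w ∈ (I ^ m • ⊤ : Submodule A A) →
      w ∈ LinearMap.ker F ⊔ (I ^ (m - c) • ⊤ : Submodule A (ι → A)) := by
  obtain ⟨c, hc⟩ := Ideal.exists_pow_inf_eq_pow_smul I (LinearMap.range F)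
  refine ⟨c, fun m w hw => ?_⟩
  by_cases hm : c ≤ m
  · have h1 : F w ∈ (I ^ m • ⊤ : Submodule A A) ⊓ LinearMap.range F :=
      ⟨hw, LinearMap.mem_range_self _ _⟩
    rw [hc m hm] at h1
    have h2 : F w ∈ Submodule.map F (I ^ (m - c) • ⊤ : Submodule A (ι → A)) := by
      rw [Submodule.map_smul'', Submodule.map_top]
      exact Submodule.smul_mono le_rfl inf_le_right h1
    obtain ⟨z, hz, hzw⟩ := h2
    refine Submodule.mem_sup.mpr ⟨w - z, ?_, z, hz, by ring⟩
    rw [LinearMap.mem_ker, map_sub, hzw, sub_self]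
  · have h : m - c = 0 := by omega
    rw [h, pow_zero, Ideal.one_eq_top, Submodule.top_smul]
    exact Submodule.mem_sup.mpr ⟨0, Submodule.zero_mem _, w, Submodule.mem_top, by ring⟩

end Shift

end Stmt6Aux


namespace Stmt6Aux

lemma acs_sum_apply {R M : Type} [CommRing R] {I : Ideal R} [AddCommGroup M] [Module R M]
    {ι : Type} [Fintype ι] (g : ι → AdicCompletion.AdicCauchySequence I M) (m : ℕ) :
    (∑ i, g i) m = ∑ i, (g i) m := by
  classical
  induction (Finset.univ : Finset ι) using Finset.induction_on with
  | empty => simp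
  | insert _ _ h ih =>
      rw [Finset.sum_insert h, Finset.sum_insert h, ← ih]
      rfl

end Stmt6Aux

open Stmt6Aux in
/-- Over a Noetherian commutative ring `A`, the `I`-adic completion of a free
`A`-module (on an arbitrary index set `S`) is flat. -/
theorem stmt6 (A : Type) [CommRing A] [IsNoetherianRing A] (I : Ideal A) (S : Type) :
    Module.Flat A (AdicCompletion I (S →₀ A)) := by
  classical
  suffices H : ∀ {ι : Type} [Fintype ι] (f : ι → A) (x : ι → AdicCompletion I (S →₀ A)),
      ∑ i, f i • x i = 0 → Module.IsTrivialRelation f x from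
    Module.Flat.iff_forall_isTrivialRelation.mpr fun hfx => H _ _ hfx
  intro ι _ f x hfx
  -- Cauchy sequence representatives of the `x i`
  choose c hc using fun i => AdicCompletion.mk_surjective I (S →₀ A) (x i)
  have h0 : AdicCompletion.mk I (S →₀ A) (∑ i, f i • c i) = 0 := by
    rw [map_sum]
    simp_rw [map_smul, hc]
    exact hfx
  have hzm : ∀ m : ℕ, ∑ i, f i • (c i m) ∈ (I ^ m • ⊤ : Submodule A (S →₀ A)) := by
    intro m
    have h1 : (AdicCompletion.mk I (S →₀ A) (∑ i, f i • c i)).val m = 0 := by rw [h0]; rfl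
    rw [AdicCompletion.mk_apply_coe, Submodule.mkQ_apply, Submodule.Quotient.mk_eq_zero] at h1
    have h2 : ((∑ i, f i • c i : AdicCompletion.AdicCauchySequence I (S →₀ A))) m
        = ∑ i, f i • (c i m) := by
      rw [acs_sum_apply]
      simp
    rwa [h2] at h1
  -- The row map given by `f` and its kernel
  set F : (ι → A) →ₗ[A] A := ∑ i, f i • LinearMap.proj i with hF
  have F_apply : ∀ w : ι → A, F w = ∑ i, f i * w i := fun w => by
    simp [hF, LinearMap.sum_apply, smul_eq_mul]
  obtain ⟨c₁, hc₁⟩ := Stmt6Aux.exists_shift I F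
  obtain ⟨n, a, ha⟩ := Submodule.fg_iff_exists_fin_generating_family.mp
    (IsNoetherian.noetherian (LinearMap.ker F))
  have hrange : LinearMap.range (matMap a A) = LinearMap.ker F := by
    rw [range_matMap, ha]
  obtain ⟨k, hk⟩ := Ideal.exists_pow_inf_eq_pow_smul I (LinearMap.ker F)
  obtain ⟨N', hN'⟩ : ∃ N'' : Submodule A (ι → (S →₀ A)), N'' = colSub S (LinearMap.ker F) :=
    ⟨_, rfl⟩
  have hkn : ∀ m ≥ k, (I ^ m • ⊤ : Submodule A (ι → (S →₀ A))) ⊓ N' =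
      I ^ (m - k) • ((I ^ k • ⊤ : Submodule A (ι → (S →₀ A))) ⊓ N') := by
    intro m hm
    have e1 : ∀ l : ℕ, (I ^ l • ⊤ : Submodule A (ι → (S →₀ A)))
        = colSub S ((I ^ l • ⊤ : Submodule A (ι → A))) := fun l => by
      rw [colSub_smul, colSub_top]
    rw [e1 m, e1 k, hN', ← colSub_inf, ← colSub_inf, hk m hm, colSub_smul]
  -- the Cauchy sequence `u` of vectors
  have hu_cauchy : AdicCompletion.IsAdicCauchy I (ι → (S →₀ A)) (fun m i => c i m) := by
    intro m m' hmm'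
    rw [SModEq.sub_mem]
    rw [mem_smul_top_pi_iff]
    intro i
    have h1 := (c i).property hmm'
    rwa [SModEq.sub_mem] at h1
  set u : AdicCompletion.AdicCauchySequence I (ι → (S →₀ A)) := ⟨fun m i => c i m, hu_cauchy⟩
    with hu_def
  have hu : ∀ m : ℕ, u m ∈ N' ⊔ (I ^ (m - c₁) • ⊤ : Submodule A (ι → (S →₀ A))) := by
    intro m
    have hcol : ∀ s : S, toCol s (u m) ∈
        LinearMap.ker F ⊔ (I ^ (m - c₁) • ⊤ : Submodule A (ι → A)) := by
      intro s
      refine hc₁ m _ ?_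
      have h3 : (∑ i, f i • c i m) s ∈ (I ^ m • ⊤ : Submodule A A) := by
        have h4 := Submodule.mem_map_of_mem (f := Finsupp.lapply (M := A) s) (hzm m)
        rw [Submodule.map_smul''] at h4
        exact Submodule.smul_mono le_rfl le_top h4
      have h2 : F (toCol s (u m)) = (∑ i, f i • c i m) s := by
        rw [F_apply, Finset.sum_apply']
        simp [smul_eq_mul]
        rfl
      rwa [h2]
    have h5 : u m ∈ colSub S (LinearMap.ker F ⊔ (I ^ (m - c₁) • ⊤ : Submodule A (ι → A))) :=
      mem_colSub.mpr hcol
    rwa [colSub_sup, colSub_smul, colSub_top, ← hN'] at h5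
  choose w hw e he hwe using fun m => Submodule.mem_sup.mp (hu (m + (c₁ + k)))
  have he' : ∀ m, e m ∈ (I ^ (m + k) • ⊤ : Submodule A (ι → (S →₀ A))) := by
    intro m
    have hmk : m + (c₁ + k) - c₁ = m + k := by omega
    have := he m
    rwa [hmk] at this
  have hdiff : ∀ m, w (m + 1) - w m ∈
      I ^ m • ((I ^ k • ⊤ : Submodule A (ι → (S →₀ A))) ⊓ N') := by
    intro m
    have hdu : (u (m+1+(c₁+k)) : ι → (S →₀ A)) - u (m+(c₁+k))
        ∈ (I ^ (m+k) • ⊤ : Submodule A (ι → (S →₀ A))) := by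
      have h1 := u.property (show m+(c₁+k) ≤ m+1+(c₁+k) by omega)
      rw [SModEq.sub_mem] at h1
      have hmono : (I ^ (m+(c₁+k)) • ⊤ : Submodule A (ι → (S →₀ A))) ≤ I ^ (m+k) • ⊤ :=
        Submodule.smul_mono (Ideal.pow_le_pow_right (by omega)) le_rfl
      have h2 := hmono h1
      simpa using Submodule.neg_mem _ h2
    have heq : w (m+1) - w m
        = ((u (m+1+(c₁+k)) : ι → (S →₀ A)) - u (m+(c₁+k))) - e (m+1) + e m := by
      rw [← hwe m, ← hwe (m+1)]
      abel
    have h1 : w (m+1) - w m ∈ (I ^ (m + k) • ⊤ : Submodule A (ι → (S →₀ A))) := by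
      rw [heq]
      exact Submodule.add_mem _ (Submodule.sub_mem _ hdu
        (Submodule.smul_mono (Ideal.pow_le_pow_right (by omega)) le_rfl (he' (m+1)))) (he' m)
    have h3 : w (m+1) - w m ∈ (I ^ (m+k) • ⊤ : Submodule A (ι → (S →₀ A))) ⊓ N' :=
      ⟨h1, Submodule.sub_mem _ (hw (m+1)) (hw m)⟩
    rw [hkn (m+k) (by omega)] at h3
    have hmk : m + k - k = m := by omega
    rwa [hmk] at h3
  -- the limit sequence inside `N'`
  have hmem_smul : ∀ (m : ℕ) (y : N'), (y : ι → (S →₀ A)) ∈ I ^ m • N' →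
      y ∈ (I ^ m • ⊤ : Submodule A N') := by
    intro m y hy
    have hmap : (I ^ m • ⊤ : Submodule A N').map N'.subtype = I ^ m • N' := by
      rw [Submodule.map_smul'', Submodule.map_top, Submodule.range_subtype]
    rw [← hmap] at hy
    obtain ⟨z, hz, hzy⟩ := hy
    have hzz : z = y := Subtype.ext hzy
    rwa [← hzz]
  have hv_cauchy : AdicCompletion.IsAdicCauchy I N' (fun m => ⟨w m, hw m⟩) := by
    rw [AdicCompletion.isAdicCauchy_iff]
    intro m
    rw [SModEq.sub_mem]
    apply hmem_smul
    have h4 : w (m+1) - w m ∈ I ^ m • N' :=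
      Submodule.smul_mono le_rfl inf_le_right (hdiff m)
    simpa using Submodule.neg_mem _ h4
  set vtil : AdicCompletion.AdicCauchySequence I N' := ⟨fun m => ⟨w m, hw m⟩, hv_cauchy⟩
    with hvtil_def
  have claim1 : AdicCompletion.map I (N'.subtype) (AdicCompletion.mk I N' vtil)
      = AdicCompletion.mk I _ u := by
    rw [AdicCompletion.map_mk]
    apply AdicCompletion.ext
    intro m
    rw [AdicCompletion.mk_apply_coe, AdicCompletion.mk_apply_coe, Submodule.mkQ_apply,
      Submodule.mkQ_apply, Submodule.Quotient.eq]
    show w m - (u m : ι → (S →₀ A)) ∈ _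
    have hdu : (u (m+(c₁+k)) : ι → (S →₀ A)) - u m
        ∈ (I ^ m • ⊤ : Submodule A (ι → (S →₀ A))) := by
      have h1 := u.property (show m ≤ m+(c₁+k) by omega)
      rw [SModEq.sub_mem] at h1
      simpa using Submodule.neg_mem _ h1
    have heq : w m - (u m : ι → (S →₀ A))
        = ((u (m+(c₁+k)) : ι → (S →₀ A)) - u m) - e m := by
      rw [← hwe m]
      abel
    rw [heq]
    exact Submodule.sub_mem _ hdu
      (Submodule.smul_mono (Ideal.pow_le_pow_right (by omega)) le_rfl (he' m))
  -- surjecting onto `N'` from a finite power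
  have hcolK : colSub S (LinearMap.ker F) = LinearMap.range (matMap a (S →₀ A)) :=
    colSub_eq_range a _ hrange
  set G : (Fin n → (S →₀ A)) →ₗ[A] (ι → (S →₀ A)) := matMap a (S →₀ A) with hG_def
  have hGmem : ∀ z, G z ∈ N' := fun z => by
    rw [hN', hcolK]; exact LinearMap.mem_range_self _ _
  set G' : (Fin n → (S →₀ A)) →ₗ[A] N' := G.codRestrict N' hGmem with hG'_def
  have hG'surj : Function.Surjective G' := by
    rintro ⟨p, hp⟩
    rw [hN', hcolK] at hp
    obtain ⟨z, hz⟩ := hp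
    exact ⟨z, Subtype.ext hz⟩
  obtain ⟨What, hWhat⟩ := AdicCompletion.map_surjective I hG'surj (AdicCompletion.mk I N' vtil)
  obtain ⟨ω, rfl⟩ := AdicCompletion.mk_surjective I _ What
  have key : AdicCompletion.mk I _ (AdicCompletion.AdicCauchySequence.map I G ω)
      = AdicCompletion.mk I _ u := by
    have h6 : AdicCompletion.mk I N' (AdicCompletion.AdicCauchySequence.map I G' ω)
        = AdicCompletion.mk I N' vtil := by
      rw [← AdicCompletion.map_mk]
      exact hWhat
    have h7 := congrArg (fun z => AdicCompletion.map I N'.subtype z) h6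
    beta_reduce at h7
    rw [AdicCompletion.map_mk, AdicCompletion.map_mk] at h7
    have h8 : @AdicCompletion.AdicCauchySequence.map A _ I ↥N' _ _ (ι → (S →₀ A)) _ _ N'.subtype
          (@AdicCompletion.AdicCauchySequence.map A _ I (Fin n → (S →₀ A)) _ _ ↥N' _ _ G' ω)
        = AdicCompletion.AdicCauchySequence.map I G ω := by
      apply AdicCompletion.AdicCauchySequence.ext
      intro m
      rfl
    rw [h8] at h7
    refine h7.trans ?_
    exact claim1
  refine ⟨n, fun i j => a j i,
    fun j => AdicCompletion.mk I (S →₀ A)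
      (AdicCompletion.AdicCauchySequence.map I (LinearMap.proj j) ω), fun i => ?_, fun j => ?_⟩
  · beta_reduce
    rw [← hc i]
    symm
    have hseq : (∑ j, (a j i) • AdicCompletion.AdicCauchySequence.map I
          (LinearMap.proj (R := A) (φ := fun _ : Fin n => (S →₀ A)) j) ω)
        = AdicCompletion.AdicCauchySequence.map I (LinearMap.proj i)
            (AdicCompletion.AdicCauchySequence.map I G ω) := by
      ext m
      rw [acs_sum_apply]
      simp [hG_def, matMap_apply]
    calc ∑ j, a j i • AdicCompletion.mk I (S →₀ A)
          (AdicCompletion.AdicCauchySequence.map I (LinearMap.proj j) ω)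
        = AdicCompletion.mk I (S →₀ A) (∑ j, (a j i) • AdicCompletion.AdicCauchySequence.map I
            (LinearMap.proj j) ω) := by rw [map_sum]; simp_rw [map_smul]
      _ = AdicCompletion.mk I (S →₀ A) (AdicCompletion.AdicCauchySequence.map I
            (LinearMap.proj i) (AdicCompletion.AdicCauchySequence.map I G ω)) := by rw [hseq]
      _ = AdicCompletion.map I (LinearMap.proj i)
            (AdicCompletion.mk I _ (AdicCompletion.AdicCauchySequence.map I G ω)) := by
              rw [AdicCompletion.map_mk]
      _ = AdicCompletion.map I (LinearMap.proj i) (AdicCompletion.mk I _ u) := by rw [key]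
      _ = AdicCompletion.mk I _ (AdicCompletion.AdicCauchySequence.map I (LinearMap.proj i) u) :=
            AdicCompletion.map_mk I _ u
      _ = AdicCompletion.mk I (S →₀ A) (c i) := rfl
  · have hj : a j ∈ LinearMap.ker F := by
      rw [← ha]
      exact Submodule.subset_span ⟨j, rfl⟩
    rw [LinearMap.mem_ker] at hj
    rw [← F_apply]
    exact hj
end

section
/- Let R be a commutative ring, p a prime with R p-torsion-free and p-adically complete, ψ : R → R a ring homomorphism, and θ(x) = (ψ(x) - x^p)/p (assuming ψ(x) ≡ x^p mod p for all x). For any unit x ∈ R^×, the series ℓ(x) = ∑_{k=1}^∞ (-1)^k (p^{k-1}/k) (θ(x)/x^p)^k converges p-adically, and ℓ : R^× → R is a group homomorphism: ℓ(xy) = ℓ(x) + ℓ(y). -/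
set_option maxRecDepth 4000

open Polynomial Finset

private lemma two_mul_le_two_pow : ∀ t : ℕ, 2 * t ≤ 2 ^ t := by
  intro t
  induction t with
  | zero => simp
  | succ t ih =>
    rcases Nat.eq_zero_or_pos t with rfl | ht
    · norm_num
    · have h1 : 1 ≤ 2 ^ t := Nat.one_le_two_pow
      have h2 : 2 * t ≥ 2 := by omega
      rw [pow_succ]; omega

private lemma ptf_pow {R : Type} [CommRing R] {p : ℕ}
    (htf : ∀ r : R, (p : R) * r = 0 → r = 0) :
    ∀ (v : ℕ) (r : R), (p : R) ^ v * r = 0 → r = 0 := by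
  intro v
  induction v with
  | zero => intro r h; simpa using h
  | succ v ih =>
    intro r h
    refine ih r (htf _ ?_)
    rw [← h]; ring

private lemma reg_poly {A : Type*} [CommRing A] (c : A) (h : A[X])
    (H : (1 + Polynomial.C c * Polynomial.X) * h = 0) : h = 0 := by
  have key : ∀ j, h.coeff j = 0 := by
    intro j
    induction j using Nat.strong_induction_on with
    | _ j ih =>
      have hc := congrArg (fun q => Polynomial.coeff q j) H
      simp only [add_mul, one_mul, Polynomial.coeff_add, Polynomial.coeff_zero,
        mul_assoc, Polynomial.coeff_C_mul] at hc
      cases j with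
      | zero => simpa using hc
      | succ i =>
        rw [Polynomial.coeff_X_mul, ih i (Nat.lt_succ_self i), mul_zero, add_zero] at hc
        exact hc
  exact Polynomial.ext fun j => by simp [key j]

private lemma sumW {A : Type*} [CommRing A] (w u : A) : ∀ n : ℕ,
    (∑ k ∈ Finset.Icc 1 n, (-1 : A) ^ k * w ^ k * u ^ (k - 1)) * (1 + w * u)
      = -(w * (1 - (-(w * u)) ^ n)) := by
  intro n
  induction n with
  | zero => norm_num
  | succ n ih =>
    rw [Finset.sum_Icc_succ_top (by omega : 1 ≤ n + 1), add_mul, ih]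
    have hx : (-(w * u)) ^ n = (-1 : A) ^ n * (w ^ n * u ^ n) := by
      rw [neg_pow, mul_pow]
    simp only [pow_succ, Nat.add_sub_cancel, hx]
    ring

private noncomputable def cf (R : Type) [CommRing R] (p k : ℕ) : R :=
  (p : R) ^ (k - 1 - padicValNat p k) * Ring.inverse (((k / p ^ padicValNat p k : ℕ) : R))

private noncomputable def ef (R : Type) [CommRing R] (p k : ℕ) : R :=
  (p : R) ^ (k - padicValNat p k) * Ring.inverse (((k / p ^ padicValNat p k : ℕ) : R))

private lemma val_lt {p : ℕ} (hp : p.Prime) {k : ℕ} (hk : 1 ≤ k) :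
    padicValNat p k < k ∧ 2 * padicValNat p k ≤ k := by
  set v := padicValNat p k
  have h1 : p ^ v ∣ k := pow_padicValNat_dvd
  have h2 : p ^ v ≤ k := Nat.le_of_dvd (by omega) h1
  have h3 : 2 ^ v ≤ p ^ v := Nat.pow_le_pow_left hp.two_le v
  have h4 := two_mul_le_two_pow v
  have h5 : v < 2 ^ v := Nat.lt_two_pow_self (n := v)
  omega

private lemma not_dvd_div {p : ℕ} (hp : p.Prime) {k : ℕ} (hk : k ≠ 0) :
    ¬ p ∣ k / p ^ padicValNat p k := by
  haveI : Fact p.Prime := ⟨hp⟩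
  intro hd
  apply pow_succ_padicValNat_not_dvd (p := p) (n := k) hk
  have hk' : p ^ padicValNat p k * (k / p ^ padicValNat p k) = k :=
    Nat.mul_div_cancel' pow_padicValNat_dvd
  have h2 : p ^ padicValNat p k * p ∣ p ^ padicValNat p k * (k / p ^ padicValNat p k) :=
    mul_dvd_mul_left _ hd
  rw [hk'] at h2
  rwa [pow_succ]

private lemma p_mul_cf {R : Type} [CommRing R] {p : ℕ} (hp : p.Prime) {k : ℕ} (hk : 1 ≤ k) :
    (p : R) * cf R p k = ef R p k := by
  rw [cf, ef, ← mul_assoc, ← pow_succ']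
  have := (val_lt hp hk).1
  congr 2
  omega

private lemma k_mul_ef {R : Type} [CommRing R] {p : ℕ} (hp : p.Prime)
    (hunit : ∀ j : ℕ, ¬ p ∣ j → IsUnit (j : R)) {k : ℕ} (hk : 1 ≤ k) :
    (k : R) * ef R p k = (p : R) ^ k := by
  set v := padicValNat p k with hv
  have hk' : p ^ v * (k / p ^ v) = k := Nat.mul_div_cancel' pow_padicValNat_dvd
  have hu : IsUnit ((k / p ^ v : ℕ) : R) := hunit _ (not_dvd_div hp (by omega))
  have hvk : v < k := (val_lt hp hk).1
  have hcast : ((p ^ v * (k / p ^ v) : ℕ) : R) = (k : R) := by rw [hk']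
  push_cast at hcast
  rw [ef, ← hcast,
    show ((p:R)^v * ((k / p ^ v : ℕ) : R)) * ((p:R) ^ (k - v) * Ring.inverse (((k / p ^ v : ℕ)) : R))
      = ((p:R)^v * (p:R)^(k-v)) * (((k / p ^ v : ℕ) : R) * Ring.inverse (((k / p ^ v : ℕ)) : R)) from by ring,
    Ring.mul_inverse_cancel _ hu, ← pow_add, mul_one]
  congr 1
  omega

private lemma div_lem {R : Type} [CommRing R] {p : ℕ} (hp : p.Prime)
    (htf : ∀ r : R, (p : R) * r = 0 → r = 0)
    (hunit : ∀ j : ℕ, ¬ p ∣ j → IsUnit (j : R)) {m n d : ℕ} (r : R)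
    (hd1 : 1 ≤ d) (hdn : d ≤ n) (hmn : 2 * m ≤ n)
    (h : (d : R) * r ∈ Ideal.span {(p : R) ^ (n + 1)}) :
    r ∈ Ideal.span {(p : R)} ^ (m + 1) := by
  set v := padicValNat p d with hv
  have hvd := val_lt hp hd1
  have hk' : p ^ v * (d / p ^ v) = d := Nat.mul_div_cancel' pow_padicValNat_dvd
  have hu : IsUnit ((d / p ^ v : ℕ) : R) := hunit _ (not_dvd_div hp (by omega))
  obtain ⟨s, hs⟩ := Ideal.mem_span_singleton.1 h
  have hcast : ((p ^ v * (d / p ^ v) : ℕ) : R) = (d : R) := by rw [hk']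
  push_cast at hcast
  have hpow : (p : R) ^ (n + 1) = (p : R) ^ v * (p : R) ^ (n + 1 - v) := by
    rw [← pow_add]; congr 1; omega
  have hz : (p : R) ^ v * (((d / p ^ v : ℕ) : R) * r - (p : R) ^ (n + 1 - v) * s) = 0 := by
    rw [mul_sub, ← mul_assoc, hcast, hs, hpow]; ring
  have h3 : ((d / p ^ v : ℕ) : R) * r = (p : R) ^ (n + 1 - v) * s := by
    have := ptf_pow htf v _ hz
    rwa [sub_eq_zero] at this
  have hr : r = (p : R) ^ (n + 1 - v) * (Ring.inverse ((d / p ^ v : ℕ) : R) * s) := by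
    calc r = (Ring.inverse ((d / p ^ v : ℕ) : R) * (((d / p ^ v : ℕ) : R))) * r := by
            rw [Ring.inverse_mul_cancel _ hu, one_mul]
    _ = Ring.inverse ((d / p ^ v : ℕ) : R) * ((((d / p ^ v : ℕ) : R)) * r) := by ring
    _ = _ := by rw [h3]; ring
  rw [Ideal.span_singleton_pow, Ideal.mem_span_singleton]
  refine ⟨(p : R) ^ (n - v - m) * (Ring.inverse ((d / p ^ v : ℕ) : R) * s), ?_⟩
  have hpw : (p : R) ^ (n + 1 - v) = (p : R) ^ (m + 1) * (p : R) ^ (n - v - m) := by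
    rw [← pow_add]; congr 1; omega
  rw [hr, hpw]; ring

private lemma key_poly {R : Type} [CommRing R] {p : ℕ} (hp : p.Prime)
    (htf : ∀ r : R, (p : R) * r = 0 → r = 0)
    (hunit : ∀ j : ℕ, ¬ p ∣ j → IsUnit (j : R))
    (a b : R) (m n : ℕ) (hmn : 2 * m ≤ n) :
    (∑ k ∈ Finset.Icc 1 n, (-1 : R) ^ k * cf R p k * (a + b + (p : R) * a * b) ^ k)
      - (∑ k ∈ Finset.Icc 1 n, (-1 : R) ^ k * cf R p k * a ^ k)
      - (∑ k ∈ Finset.Icc 1 n, (-1 : R) ^ k * cf R p k * b ^ k)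
      ∈ Ideal.span {(p : R)} ^ m := by
  classical
  set CC : R →+* Polynomial (Polynomial R) :=
    (Polynomial.C : Polynomial R →+* Polynomial (Polynomial R)).comp
      (Polynomial.C : R →+* Polynomial R) with hCCdef
  have hCC : ∀ r : R, CC r = Polynomial.C (Polynomial.C r) := fun _ => rfl
  set A : Polynomial (Polynomial R) := Polynomial.X with hAdef
  set Bq : Polynomial (Polynomial R) := Polynomial.C Polynomial.X with hBqdef
  set P : Polynomial (Polynomial R) := CC (p : R) with hPdef
  set Cq : Polynomial (Polynomial R) := A + Bq + P * A * Bq with hCqdef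
  set H : Polynomial (Polynomial R) :=
    ∑ k ∈ Finset.Icc 1 n, CC ((-1 : R) ^ k * ef R p k) * (Cq ^ k - A ^ k - Bq ^ k) with hHdef
  -- derivative of Cq
  have hdC : Polynomial.derivative Cq = 1 + P * Bq := by
    rw [hCqdef, hAdef, hBqdef, hPdef, hCC]
    simp [Polynomial.derivative_mul]
  -- derivative of H
  have hdH1 : Polynomial.derivative H =
      (∑ k ∈ Finset.Icc 1 n, (-1 : Polynomial (Polynomial R)) ^ k * P ^ k * Cq ^ (k - 1))
          * (1 + P * Bq)
        - (∑ k ∈ Finset.Icc 1 n, (-1 : Polynomial (Polynomial R)) ^ k * P ^ k * A ^ (k - 1)) := by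
    rw [hHdef, Polynomial.derivative_sum, Finset.sum_mul, ← Finset.sum_sub_distrib]
    refine Finset.sum_congr rfl ?_
    intro k hk
    have hk1 : 1 ≤ k := (Finset.mem_Icc.mp hk).1
    have hinner : (-1 : R) ^ k * ef R p k * ((k : ℕ) : R) = (-1 : R) ^ k * (p : R) ^ k := by
      rw [mul_assoc, mul_comm (ef R p k), k_mul_ef hp hunit hk1]
    have hcoef : Polynomial.C (Polynomial.C ((-1 : R) ^ k * ef R p k))
        * Polynomial.C (((k : ℕ) : Polynomial R))
        = (-1 : Polynomial (Polynomial R)) ^ k * P ^ k := by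
      have h1 : ((k : ℕ) : Polynomial R) = Polynomial.C ((k : ℕ) : R) :=
        (map_natCast (Polynomial.C : R →+* Polynomial R) k).symm
      rw [h1, ← map_mul, ← map_mul, hinner, hPdef, hCC]
      simp [map_mul, map_pow]
    rw [hCC, Polynomial.derivative_C_mul, Polynomial.derivative_sub,
      Polynomial.derivative_sub, Polynomial.derivative_pow, Polynomial.derivative_pow,
      Polynomial.derivative_pow, hdC, hAdef, hBqdef, Polynomial.derivative_X,
      Polynomial.derivative_C]
    linear_combination (Cq ^ (k - 1) * (1 + P * Polynomial.C Polynomial.X)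
      - Polynomial.X ^ (k - 1)) * hcoef
  -- the exact form of the derivative of H
  have hW1 := sumW P Cq n
  have hW2 := sumW P A n
  have hx1 : (-(P * Cq)) ^ n
      = (-1 : Polynomial (Polynomial R)) ^ n * (P ^ n * Cq ^ n) := by
    rw [show (-(P * Cq)) = (-1 : Polynomial (Polynomial R)) * (P * Cq) from by ring,
      mul_pow, mul_pow]
  have hx2 : (-(P * A)) ^ n
      = (-1 : Polynomial (Polynomial R)) ^ n * (P ^ n * A ^ n) := by
    rw [show (-(P * A)) = (-1 : Polynomial (Polynomial R)) * (P * A) from by ring,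
      mul_pow, mul_pow]
  rw [hx1] at hW1
  rw [hx2] at hW2
  have h11 : (1 + P * A) * (1 + P * Bq) = 1 + P * Cq := by rw [hCqdef]; ring
  have hgs := geom_sum₂_mul Cq A n
  have hCA : Cq - A = Bq * (1 + P * A) := by rw [hCqdef]; ring
  have hmain : (1 + P * A) * Polynomial.derivative H
      = (1 + P * A) * ((-1 : Polynomial (Polynomial R)) ^ n * P ^ (n + 1)
          * ((∑ i ∈ Finset.range n, Cq ^ i * A ^ (n - 1 - i)) * Bq)) := by
    rw [hdH1]
    linear_combination (∑ k ∈ Finset.Icc 1 n,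
        (-1 : Polynomial (Polynomial R)) ^ k * P ^ k * Cq ^ (k - 1)) * h11 + hW1 - hW2
      - ((-1 : Polynomial (Polynomial R)) ^ n * P * P ^ n) * hgs
      - ((-1 : Polynomial (Polynomial R)) ^ n * P * P ^ n
          * (∑ i ∈ Finset.range n, Cq ^ i * A ^ (n - 1 - i))) * hCA
  have hdHeq : Polynomial.derivative H
      = (-1 : Polynomial (Polynomial R)) ^ n * P ^ (n + 1)
          * ((∑ i ∈ Finset.range n, Cq ^ i * A ^ (n - 1 - i)) * Bq) := by
    have h1PA : (1 : Polynomial (Polynomial R)) + Polynomial.C (Polynomial.C ((p : R)))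
        * Polynomial.X = 1 + P * A := by rw [hPdef, hCC, hAdef]
    have hz : (1 + Polynomial.C (Polynomial.C ((p : R))) * Polynomial.X)
        * (Polynomial.derivative H
            - (-1 : Polynomial (Polynomial R)) ^ n * P ^ (n + 1)
              * ((∑ i ∈ Finset.range n, Cq ^ i * A ^ (n - 1 - i)) * Bq)) = 0 := by
      rw [h1PA, mul_sub, hmain, sub_self]
    have := reg_poly _ _ hz
    rwa [sub_eq_zero] at this
  -- coefficients of the derivative are divisible by p^(n+1)
  have hcoeff_dH : ∀ d e : ℕ,
      ((Polynomial.derivative H).coeff d).coeff e ∈ Ideal.span {(p : R) ^ (n + 1)} := by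
    intro d e
    have hsc : Polynomial.C (Polynomial.C ((-1 : R) ^ n * (p : R) ^ (n + 1)))
        = (-1 : Polynomial (Polynomial R)) ^ n * P ^ (n + 1) := by
      rw [hPdef, hCC]
      simp [map_mul, map_pow]
    rw [hdHeq, ← hsc, Polynomial.coeff_C_mul, Polynomial.coeff_C_mul]
    exact Ideal.mem_span_singleton.2
      ⟨(-1 : R) ^ n * ((((∑ i ∈ Finset.range n, Cq ^ i * A ^ (n - 1 - i)) * Bq).coeff d).coeff e),
        by ring⟩
  -- constant coefficient (in A) of H vanishes
  have hcoeff0 : H.coeff 0 = 0 := by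
    rw [hHdef, Polynomial.finset_sum_coeff]
    refine Finset.sum_eq_zero ?_
    intro k hk
    have hk1 : 1 ≤ k := (Finset.mem_Icc.mp hk).1
    rw [hCC, Polynomial.coeff_C_mul, Polynomial.coeff_sub, Polynomial.coeff_sub]
    have hc0 : ∀ q : Polynomial (Polynomial R),
        q.coeff 0 = Polynomial.constantCoeff q := fun _ => rfl
    rw [hc0, hc0, hc0, map_pow, map_pow, map_pow]
    have h1 : Polynomial.constantCoeff Cq = Polynomial.X := by
      rw [hCqdef, hAdef, hBqdef, hPdef, hCC]
      simp
    have h2 : Polynomial.constantCoeff A = 0 := by rw [hAdef]; simp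
    have h3 : Polynomial.constantCoeff Bq = Polynomial.X := by rw [hBqdef]; simp
    rw [h1, h2, h3, zero_pow (by omega : k ≠ 0)]
    ring
  -- degree bound
  have hdeg : H.natDegree ≤ n := by
    rw [hHdef]
    refine Polynomial.natDegree_sum_le_of_forall_le _ _ ?_
    intro k hk
    obtain ⟨hk1, hk2⟩ := Finset.mem_Icc.mp hk
    have hCq1 : Cq.natDegree ≤ 1 := by
      rw [hCqdef, hAdef, hBqdef, hPdef, hCC]
      compute_degree
    have hb1 : (Cq ^ k).natDegree ≤ n :=
      Polynomial.natDegree_pow_le.trans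
        (le_trans (Nat.mul_le_mul_left k hCq1) (by omega))
    have hb2 : (A ^ k).natDegree ≤ n := by
      rw [hAdef]
      exact Polynomial.natDegree_pow_le.trans
        (le_trans (Nat.mul_le_mul_left k Polynomial.natDegree_X_le) (by omega))
    have hb3 : (Bq ^ k).natDegree ≤ n := by
      rw [hBqdef]
      refine Polynomial.natDegree_pow_le.trans ?_
      rw [Polynomial.natDegree_C]
      omega
    rw [hCC]
    refine (Polynomial.natDegree_C_mul_le _ _).trans ?_
    refine (Polynomial.natDegree_sub_le _ _).trans ?_
    refine max_le ?_ hb3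
    exact (Polynomial.natDegree_sub_le _ _).trans (max_le hb1 hb2)
  -- all coefficients of H are in (p)^(m+1)
  have hcoeffH : ∀ d e : ℕ, (H.coeff d).coeff e ∈ Ideal.span {(p : R)} ^ (m + 1) := by
    intro d e
    cases d with
    | zero => rw [hcoeff0]; simp
    | succ d =>
      by_cases hdn : d + 1 ≤ n
      · have h1 := Polynomial.coeff_derivative H d
        have h2 := hcoeff_dH d e
        rw [h1] at h2
        have h3 : ((d : Polynomial R) + 1) = Polynomial.C (((d + 1 : ℕ) : R)) := by
          rw [map_natCast (Polynomial.C : R →+* Polynomial R) (d + 1)]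
          push_cast
          ring
        rw [h3, Polynomial.coeff_mul_C] at h2
        exact div_lem hp htf hunit _ (by omega) hdn hmn (by rwa [mul_comm] at h2)
      · have hz : H.coeff (d + 1) = 0 :=
          Polynomial.coeff_eq_zero_of_natDegree_lt (by omega)
        rw [hz]
        simp
  -- evaluation at (a, b)
  set Φ : Polynomial (Polynomial R) →+* R :=
    Polynomial.eval₂RingHom (Polynomial.evalRingHom b) a with hPhidef
  have hΦmem : Φ H ∈ Ideal.span {(p : R)} ^ (m + 1) := by
    have he : Φ H = Polynomial.eval₂ (Polynomial.evalRingHom b) a H := by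
      rw [hPhidef]; rfl
    rw [he, Polynomial.eval₂_eq_sum_range]
    refine Ideal.sum_mem _ ?_
    intro i _
    refine Ideal.mul_mem_right _ _ ?_
    rw [Polynomial.coe_evalRingHom, Polynomial.eval_eq_sum_range]
    refine Ideal.sum_mem _ ?_
    intro e _
    exact Ideal.mul_mem_right _ _ (hcoeffH i e)
  have hΦA : Φ A = a := by rw [hPhidef, hAdef]; simp
  have hΦB : Φ Bq = b := by rw [hPhidef, hBqdef]; simp
  have hΦCC : ∀ r : R, Φ (CC r) = r := by
    intro r
    rw [hCC r, hPhidef]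
    simp
  have hΦCq : Φ Cq = a + b + (p : R) * a * b := by
    rw [hCqdef, map_add, map_add, map_mul, map_mul, hΦA, hΦB, hPdef, hΦCC]
  have hΦH : Φ H = (p : R) *
      ((∑ k ∈ Finset.Icc 1 n, (-1 : R) ^ k * cf R p k * (a + b + (p : R) * a * b) ^ k)
        - (∑ k ∈ Finset.Icc 1 n, (-1 : R) ^ k * cf R p k * a ^ k)
        - (∑ k ∈ Finset.Icc 1 n, (-1 : R) ^ k * cf R p k * b ^ k)) := by
    rw [hHdef, map_sum, mul_sub, mul_sub, Finset.mul_sum, Finset.mul_sum, Finset.mul_sum,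
      ← Finset.sum_sub_distrib, ← Finset.sum_sub_distrib]
    refine Finset.sum_congr rfl ?_
    intro k hk
    have hk1 : 1 ≤ k := (Finset.mem_Icc.mp hk).1
    rw [map_mul, map_sub, map_sub, map_pow, map_pow, map_pow, hΦA, hΦB, hΦCq, hΦCC]
    have hpc := p_mul_cf (R := R) hp hk1
    linear_combination ((-1 : R) ^ k * ((a + b + (p : R) * a * b) ^ k - a ^ k - b ^ k)) * hpc.symm
  rw [Ideal.span_singleton_pow] at hΦmem
  obtain ⟨s, hs⟩ := Ideal.mem_span_singleton.1 hΦmem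
  rw [hΦH] at hs
  have hz : (p : R) *
      (((∑ k ∈ Finset.Icc 1 n, (-1 : R) ^ k * cf R p k * (a + b + (p : R) * a * b) ^ k)
        - (∑ k ∈ Finset.Icc 1 n, (-1 : R) ^ k * cf R p k * a ^ k)
        - (∑ k ∈ Finset.Icc 1 n, (-1 : R) ^ k * cf R p k * b ^ k)) - (p : R) ^ m * s) = 0 := by
    rw [mul_sub, hs, pow_succ']
    ring
  have hD := htf _ hz
  rw [sub_eq_zero] at hD
  rw [Ideal.span_singleton_pow, Ideal.mem_span_singleton]
  exact ⟨s, hD⟩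

/-- Let `R` be a `p`-torsion-free, `p`-adically complete commutative ring, `ψ` a
ring endomorphism with `ψ(x) = x^p + p·θ(x)`.  Every natural number prime to `p` is
invertible in `R`, and there is a map `ℓ : Rˣ → R` such that for each unit `x`,
`ℓ(x)` is the `p`-adic limit of the partial sums of
`∑_{k≥1} (-1)^k (p^{k-1}/k) (θ(x)/x^p)^k` (with `p^{k-1}/k` interpreted as
`p^{k-1-v_p(k)} · (k/p^{v_p(k)})⁻¹`), and `ℓ` is a group homomorphism:
`ℓ(xy) = ℓ(x) + ℓ(y)`. -/
theorem stmt17 (R : Type) [CommRing R] (p : ℕ) (hp : p.Prime)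
    (htf : ∀ r : R, (p : R) * r = 0 → r = 0)
    (hcomp : IsAdicComplete (Ideal.span {(p : R)}) R)
    (ψ : R →+* R) (θ : R → R)
    (hψθ : ∀ x : R, ψ x = x ^ p + (p : R) * θ x) :
    (∀ k : ℕ, ¬ p ∣ k → IsUnit (k : R)) ∧
    ∃ ℓ : Rˣ → R,
      (∀ x : Rˣ, ∀ m : ℕ, ∃ N : ℕ, ∀ n : ℕ, N ≤ n →
        ℓ x - (∑ k ∈ Finset.Icc 1 n,
            (-1 : R) ^ k *
              ((p : R) ^ (k - 1 - padicValNat p k) *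
                Ring.inverse (((k / p ^ padicValNat p k : ℕ) : R))) *
              (θ (x : R) * Ring.inverse ((x : R) ^ p)) ^ k) ∈
          Ideal.span {(p : R)} ^ m) ∧
      (∀ x y : Rˣ, ℓ (x * y) = ℓ x + ℓ y) := by
  haveI := hcomp
  -- Part 1 : numbers prime to p are invertible
  have hunit : ∀ k : ℕ, ¬ p ∣ k → IsUnit (k : R) := by
    intro k hk
    have hjac : (p : R) ∈ Ideal.jacobson (⊥ : Ideal R) :=
      IsAdicComplete.le_jacobson_bot (I := Ideal.span {(p : R)}) (Ideal.mem_span_singleton_self _)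
    have hcop : IsCoprime (k : ℤ) (p : ℤ) :=
      Nat.isCoprime_iff_coprime.mpr (Nat.coprime_comm.mp (hp.coprime_iff_not_dvd.mpr hk))
    obtain ⟨u, v, huv⟩ := hcop
    have huvR : (u : R) * (k : R) + (v : R) * (p : R) = 1 := by
      have h := congrArg (fun z : ℤ => (z : R)) huv
      push_cast at h
      exact h
    have h1 : IsUnit ((u : R) * (k : R)) := by
      have h2 := Ideal.mem_jacobson_bot.mp hjac (-(v : R))
      have he : (p : R) * (-(v : R)) + 1 = (u : R) * (k : R) := by
        linear_combination -huvR
      rwa [he] at h2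
    exact isUnit_of_mul_isUnit_right h1
  refine ⟨hunit, ?_⟩
  have hcfeq : ∀ k : ℕ, (p : R) ^ (k - 1 - padicValNat p k) *
      Ring.inverse (((k / p ^ padicValNat p k : ℕ) : R)) = cf R p k := fun _ => rfl
  -- the partial sums
  set S : Rˣ → ℕ → R := fun x n => ∑ k ∈ Finset.Icc 1 n,
    (-1 : R) ^ k * cf R p k * (θ (x : R) * Ring.inverse ((x : R) ^ p)) ^ k with hSdef
  -- individual terms lie deep in the filtration
  have hterm : ∀ (x : Rˣ) (m k : ℕ), 2 * m + 2 ≤ k →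
      (-1 : R) ^ k * cf R p k * (θ (x : R) * Ring.inverse ((x : R) ^ p)) ^ k
        ∈ Ideal.span {(p : R)} ^ m := by
    intro x m k hk
    have hv := val_lt hp (show 1 ≤ k by omega)
    have h1 : cf R p k ∈ Ideal.span {(p : R)} ^ m := by
      have h2 : cf R p k ∈ Ideal.span {(p : R)} ^ (k - 1 - padicValNat p k) := by
        rw [Ideal.span_singleton_pow, Ideal.mem_span_singleton, cf]
        exact Dvd.intro _ rfl
      exact Ideal.pow_le_pow_right (by omega) h2
    exact Ideal.mul_mem_right _ _ (Ideal.mul_mem_left _ _ h1)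
  have hIcc : ∀ t : ℕ, Finset.Icc 1 t = Finset.Ioc 0 t := by
    intro t; ext z; simp only [Finset.mem_Icc, Finset.mem_Ioc]; omega
  -- difference of partial sums
  have hdiff : ∀ (x : Rˣ) (m n1 n2 : ℕ), 2 * m + 1 ≤ n1 → n1 ≤ n2 →
      S x n2 - S x n1 ∈ Ideal.span {(p : R)} ^ m := by
    intro x m n1 n2 h1 h2
    rw [hSdef]
    simp only
    rw [hIcc, hIcc, ← Finset.sum_Ioc_consecutive _ (Nat.zero_le n1) h2, add_sub_cancel_left]
    refine Ideal.sum_mem _ ?_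
    intro k hk
    have := Finset.mem_Ioc.mp hk
    exact hterm x m k (by omega)
  -- existence of the limit
  have hex : ∀ x : Rˣ, ∃ L : R, ∀ m nn : ℕ, 2 * m + 2 ≤ nn →
      L - S x nn ∈ Ideal.span {(p : R)} ^ m := by
    intro x
    have hcauchy : ∀ {i j : ℕ}, i ≤ j →
        S x (2 * i + 2) ≡ S x (2 * j + 2)
          [SMOD ((Ideal.span {(p : R)}) ^ i • ⊤ : Submodule R R)] := by
      intro i j hij
      rw [SModEq.sub_mem]
      simp only [smul_eq_mul, Ideal.mul_top]
      have h := hdiff x i (2 * i + 2) (2 * j + 2) (by omega) (by omega)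
      have he : S x (2 * i + 2) - S x (2 * j + 2)
          = -(S x (2 * j + 2) - S x (2 * i + 2)) := by ring
      rw [he]
      exact neg_mem h
    obtain ⟨L, hL⟩ := IsPrecomplete.prec hcomp.toIsPrecomplete hcauchy
    refine ⟨L, ?_⟩
    intro m nn hnn
    have h1 : S x (2 * m + 2) - L ∈ Ideal.span {(p : R)} ^ m := by
      have := hL m
      rw [SModEq.sub_mem] at this
      simpa only [smul_eq_mul, Ideal.mul_top] using this
    have h2 : S x nn - S x (2 * m + 2) ∈ Ideal.span {(p : R)} ^ m :=
      hdiff x m (2 * m + 2) nn (by omega) (by omega)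
    have he : L - S x nn = -(S x (2 * m + 2) - L) - (S x nn - S x (2 * m + 2)) := by ring
    rw [he]
    exact sub_mem (neg_mem h1) h2
  choose ℓ hℓ using hex
  refine ⟨ℓ, ?_, ?_⟩
  · intro x m
    refine ⟨2 * m + 2, fun n hn => ?_⟩
    simp only [hcfeq]
    exact hℓ x m n hn
  · intro x y
    -- inverses of units
    have hinv : ∀ u : Rˣ, Ring.inverse ((u : R) ^ p) = ((u⁻¹ : Rˣ) : R) ^ p := by
      intro u
      rw [← Units.val_pow_eq_pow_val, Ring.inverse_unit, ← Units.val_pow_eq_pow_val, inv_pow]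
    have hx1 : ((x : R)) ^ p * ((x⁻¹ : Rˣ) : R) ^ p = 1 := by
      rw [← mul_pow, Units.mul_inv, one_pow]
    have hy1 : ((y : R)) ^ p * ((y⁻¹ : Rˣ) : R) ^ p = 1 := by
      rw [← mul_pow, Units.mul_inv, one_pow]
    -- multiplicativity of θ
    have hθmul : θ ((x : R) * (y : R)) = θ (x : R) * (y : R) ^ p
        + (x : R) ^ p * θ (y : R) + (p : R) * (θ (x : R) * θ (y : R)) := by
      have h0 := map_mul ψ (x : R) (y : R)
      rw [hψθ, hψθ, hψθ] at h0
      have hz : (p : R) * (θ ((x : R) * (y : R)) - (θ (x : R) * (y : R) ^ p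
          + (x : R) ^ p * θ (y : R) + (p : R) * (θ (x : R) * θ (y : R)))) = 0 := by
        linear_combination h0
      have := htf _ hz
      rwa [sub_eq_zero] at this
    -- multiplicativity of t
    have htmul : θ (((x * y : Rˣ)) : R) * Ring.inverse ((((x * y : Rˣ)) : R) ^ p)
        = (θ (x : R) * Ring.inverse ((x : R) ^ p)) + (θ (y : R) * Ring.inverse ((y : R) ^ p))
          + (p : R) * (θ (x : R) * Ring.inverse ((x : R) ^ p))
            * (θ (y : R) * Ring.inverse ((y : R) ^ p)) := by
      have hinv2 : Ring.inverse ((((x * y : Rˣ)) : R) ^ p)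
          = ((x⁻¹ : Rˣ) : R) ^ p * ((y⁻¹ : Rˣ) : R) ^ p := by
        rw [hinv (x * y), mul_inv, Units.val_mul, mul_pow]
      rw [hinv2, hinv x, hinv y, Units.val_mul, hθmul]
      linear_combination (θ (x : R) * ((x⁻¹ : Rˣ) : R) ^ p) * hy1
        + (θ (y : R) * ((y⁻¹ : Rˣ) : R) ^ p) * hx1
    -- the truncated additivity
    have key : ∀ m : ℕ, ℓ (x * y) - ℓ x - ℓ y ∈ Ideal.span {(p : R)} ^ m := by
      intro m
      have h1 := hℓ (x * y) m (2 * m + 2) le_rfl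
      have h2 := hℓ x m (2 * m + 2) le_rfl
      have h3 := hℓ y m (2 * m + 2) le_rfl
      have h4 : S (x * y) (2 * m + 2) - S x (2 * m + 2) - S y (2 * m + 2)
          ∈ Ideal.span {(p : R)} ^ m := by
        rw [hSdef]
        simp only [htmul]
        exact key_poly hp htf hunit _ _ m (2 * m + 2) (by omega)
      have he : ℓ (x * y) - ℓ x - ℓ y
          = (ℓ (x * y) - S (x * y) (2 * m + 2)) - (ℓ x - S x (2 * m + 2))
            - (ℓ y - S y (2 * m + 2))
            + (S (x * y) (2 * m + 2) - S x (2 * m + 2) - S y (2 * m + 2)) := by ring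
      rw [he]
      exact add_mem (sub_mem (sub_mem h1 h2) h3) h4
    have hz : ℓ (x * y) - ℓ x - ℓ y = 0 := by
      refine hcomp.toIsHausdorff.haus _ ?_
      intro n
      rw [SModEq.zero]
      simp only [smul_eq_mul, Ideal.mul_top]
      exact key n
    rw [sub_sub, sub_eq_zero] at hz
    exact hz
end
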